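/- arXiv:2112.10772 — 8 statements merged into one kernel-verified Lean document; each statement's English description precedes it below -/
import Mathlib

section
/- For every bounded continuous function f : ℝ → ℝ and every x ∈ ℝ, one has (p*f)(x) = (p₊*f)(x) + (p₋*f)(x); moreover the function x ↦ (p*f)(x) is differentiable on ℝ with derivative (p*f)'(x) = (p₋*f)(x) − (p₊*f)(x). -/
open MeasureTheory Real Set

/-- The convolution `(p*f)(x) = ∫_ℝ (1/2) e^{-|x-y|} f(y) dy` with `p(x) = (1/2)exp(-|x|)`. -/
noncomputable def pConv (f : ℝ → ℝ) (x : ℝ) : ℝ := ∫ y : ℝ, (1/2) * Real.exp (-|x - y|) * f y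

/-- `(p₊*f)(x) = (1/2)∫_{-∞}^{x} e^{y-x} f(y) dy`. -/
noncomputable def pPlus (f : ℝ → ℝ) (x : ℝ) : ℝ := (1/2) * ∫ y in Set.Iic x, Real.exp (y - x) * f y

/-- `(p₋*f)(x) = (1/2)∫_{x}^{∞} e^{x-y} f(y) dy`. -/
noncomputable def pMinus (f : ℝ → ℝ) (x : ℝ) : ℝ := (1/2) * ∫ y in Set.Ici x, Real.exp (x - y) * f y

/-! Splitting the kernel at `y = x` gives `p*f = p₊*f + p₋*f`, and pulling the factor depending
on `x` out of each half, `p₊*f(x) = ½ e^{-x} ∫_{-∞}^x e^y f(y) dy` and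
`p₋*f(x) = ½ e^x ∫_x^∞ e^{-y} f(y) dy`. These integrals converge because `f` is bounded, so the
fundamental theorem of calculus and the product rule give `(p₊*f)' = f/2 - p₊*f` and
`(p₋*f)' = p₋*f - f/2`; the terms `f/2` cancel in the sum. -/

section FTC

variable {E : Type*} [NormedAddCommGroup E] [NormedSpace ℝ E] [CompleteSpace E] {g : ℝ → E}

theorem hasDerivAt_setIntegral_Iic (hg : Continuous g) (hint : ∀ a, IntegrableOn g (Iic a))
    (x : ℝ) : HasDerivAt (fun w => ∫ t in Iic w, g t) (g x) x := by
  have h : (fun w => ∫ t in Iic w, g t) =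
      fun w => (∫ t in Iic 0, g t) + ∫ t in (0 : ℝ)..w, g t := by
    funext w
    rw [← intervalIntegral.integral_Iic_sub_Iic (hint 0) (hint w), add_sub_cancel]
  rw [h]
  exact (intervalIntegral.integral_hasDerivAt_right (hg.intervalIntegrable _ _)
    (hg.stronglyMeasurableAtFilter _ _) hg.continuousAt).const_add _

theorem hasDerivAt_setIntegral_Ici (hg : Continuous g) (hint : ∀ a, IntegrableOn g (Ici a))
    (x : ℝ) : HasDerivAt (fun w => ∫ t in Ici w, g t) (-g x) x := by
  have h : (fun w => ∫ t in Ici w, g t) =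
      fun w => (∫ t in Ici 0, g t) - ∫ t in (0 : ℝ)..w, g t := by
    funext w
    rw [← intervalIntegral.integral_Ici_sub_Ici' (hint 0) (hint w), sub_sub_cancel]
  rw [h]
  exact (intervalIntegral.integral_hasDerivAt_right (hg.intervalIntegrable _ _)
    (hg.stronglyMeasurableAtFilter _ _) hg.continuousAt).const_sub _

end FTC

section Kernel

variable {f : ℝ → ℝ}

theorem integrableOn_Iic_exp_mul_of_bounded (hf : AEStronglyMeasurable f)
    (hb : ∃ C, ∀ x, |f x| ≤ C) (a : ℝ) : IntegrableOn (fun y => exp y * f y) (Iic a) := by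
  obtain ⟨C, hC⟩ := hb
  exact (integrableOn_exp_Iic a).mul_bdd hf.restrict (ae_of_all _ hC)

theorem integrableOn_Ici_exp_neg_mul_of_bounded (hf : AEStronglyMeasurable f)
    (hb : ∃ C, ∀ x, |f x| ≤ C) (a : ℝ) :
    IntegrableOn (fun y => exp (-y) * f y) (Ici a) := by
  obtain ⟨C, hC⟩ := hb
  have hexp : IntegrableOn (fun y => exp (-y)) (Ici a) := by
    rw [integrableOn_Ici_iff_integrableOn_Ioi]
    exact integrableOn_exp_neg_Ioi a
  exact hexp.mul_bdd hf.restrict (ae_of_all _ hC)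

theorem half_exp_neg_abs_sub_mul_of_le {x y : ℝ} (hy : y ≤ x) :
    1 / 2 * exp (-|x - y|) * f y = exp (-x) / 2 * (exp y * f y) := by
  rw [abs_of_nonneg (sub_nonneg.2 hy), neg_sub, sub_eq_add_neg, exp_add]
  ring

theorem half_exp_neg_abs_sub_mul_of_ge {x y : ℝ} (hy : x ≤ y) :
    1 / 2 * exp (-|x - y|) * f y = exp x / 2 * (exp (-y) * f y) := by
  rw [abs_of_nonpos (sub_nonpos.2 hy), neg_neg, sub_eq_add_neg, exp_add]
  ring

theorem pPlus_eq (x : ℝ) : pPlus f x = exp (-x) / 2 * ∫ y in Iic x, exp y * f y := by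
  rw [pPlus, ← integral_const_mul, ← integral_const_mul]
  refine setIntegral_congr_fun measurableSet_Iic fun y _ => ?_
  rw [sub_eq_add_neg, exp_add]
  ring

theorem pMinus_eq (x : ℝ) : pMinus f x = exp x / 2 * ∫ y in Ici x, exp (-y) * f y := by
  rw [pMinus, ← integral_const_mul, ← integral_const_mul]
  refine setIntegral_congr_fun measurableSet_Ici fun y _ => ?_
  rw [sub_eq_add_neg, exp_add]
  ring

theorem pConv_eq_pPlus_add_pMinus (hf : AEStronglyMeasurable f) (hb : ∃ C, ∀ x, |f x| ≤ C)
    (x : ℝ) : pConv f x = pPlus f x + pMinus f x := by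
  have hIic : ∫ y in Iic x, 1 / 2 * exp (-|x - y|) * f y = pPlus f x := by
    rw [pPlus_eq, ← integral_const_mul]
    exact setIntegral_congr_fun measurableSet_Iic fun y hy => half_exp_neg_abs_sub_mul_of_le hy
  have hIci : ∫ y in Ici x, 1 / 2 * exp (-|x - y|) * f y = pMinus f x := by
    rw [pMinus_eq, ← integral_const_mul]
    exact setIntegral_congr_fun measurableSet_Ici fun y hy => half_exp_neg_abs_sub_mul_of_ge hy
  have hintIic : IntegrableOn (fun y => 1 / 2 * exp (-|x - y|) * f y) (Iic x) :=
    IntegrableOn.congr_fun ((integrableOn_Iic_exp_mul_of_bounded hf hb x).const_mul _)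
      (fun y hy => (half_exp_neg_abs_sub_mul_of_le hy).symm) measurableSet_Iic
  have hintIoi : IntegrableOn (fun y => 1 / 2 * exp (-|x - y|) * f y) (Ioi x) := by
    rw [← integrableOn_Ici_iff_integrableOn_Ioi]
    exact IntegrableOn.congr_fun ((integrableOn_Ici_exp_neg_mul_of_bounded hf hb x).const_mul _)
      (fun y hy => (half_exp_neg_abs_sub_mul_of_ge hy).symm) measurableSet_Ici
  rw [pConv, ← intervalIntegral.integral_Iic_add_Ioi hintIic hintIoi,
    ← integral_Ici_eq_integral_Ioi, hIic, hIci]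

variable (hf : Continuous f) (hb : ∃ C, ∀ x, |f x| ≤ C) (x : ℝ)
include hf hb

theorem hasDerivAt_pPlus : HasDerivAt (pPlus f) (f x / 2 - pPlus f x) x := by
  have hF : HasDerivAt (fun w => ∫ y in Iic w, exp y * f y) (exp x * f x) x :=
    hasDerivAt_setIntegral_Iic (continuous_exp.mul hf)
      (integrableOn_Iic_exp_mul_of_bounded hf.aestronglyMeasurable hb) x
  have hexp : HasDerivAt (fun w => exp (-w) / 2) (-exp (-x) / 2) x := by
    simpa using (hasDerivAt_neg x).exp.div_const 2
  rw [pPlus_eq, funext pPlus_eq]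
  refine (hexp.mul hF).congr_deriv ?_
  rw [exp_neg]
  field_simp
  ring

theorem hasDerivAt_pMinus : HasDerivAt (pMinus f) (pMinus f x - f x / 2) x := by
  have hG : HasDerivAt (fun w => ∫ y in Ici w, exp (-y) * f y) (-(exp (-x) * f x)) x :=
    hasDerivAt_setIntegral_Ici ((continuous_exp.comp continuous_neg).mul hf)
      (integrableOn_Ici_exp_neg_mul_of_bounded hf.aestronglyMeasurable hb) x
  rw [pMinus_eq, funext pMinus_eq]
  refine (((hasDerivAt_exp x).div_const 2).mul hG).congr_deriv ?_
  rw [exp_neg]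
  field_simp
  ring

end Kernel

theorem stmt0 (f : ℝ → ℝ) (hf : Continuous f) (hb : ∃ C, ∀ x, |f x| ≤ C) :
    (∀ x : ℝ, pConv f x = pPlus f x + pMinus f x) ∧
    (∀ x : ℝ, HasDerivAt (pConv f) (pMinus f x - pPlus f x) x) := by
  have hsplit := pConv_eq_pPlus_add_pMinus hf.aestronglyMeasurable hb
  refine ⟨hsplit, fun x => ?_⟩
  rw [show pConv f = pPlus f + pMinus f from funext hsplit]
  exact ((hasDerivAt_pPlus hf hb x).add (hasDerivAt_pMinus hf hb x)).congr_deriv (by ring)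
end

section
/- Let m : ℝ → ℝ be bounded and continuous and set u = p*m. Then sup_x |u(x)| ≤ sup_x |m(x)|, sup_x |u'(x)| ≤ sup_x |m(x)|, and sup_x |u''(x)| ≤ 2·sup_x |m(x)|; in particular sup|u| + sup|u'| + sup|u''| ≤ 4·sup|m|. -/
open MeasureTheory Real Set

/-! Splitting the kernel at `y = x` gives `p*m = p₊*m + p₋*m`, and each half kernel has
mass `1/2`, so `|p₊*m|, |p₋*m| ≤ M/2` with `M = sup |m|`. Each half solves a first-order
equation, `(p₊*m)' = m/2 - p₊*m` and `(p₋*m)' = p₋*m - m/2`, so `(p*m)' = p₋*m - p₊*m` is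
bounded by `M` and `(p*m)'' = p*m - m` by `2M`. -/

theorem hasDerivAt_integral_Iic {E : Type*} [NormedAddCommGroup E] [NormedSpace ℝ E]
    [CompleteSpace E] {f : ℝ → E} (hf : Continuous f) (hint : ∀ x, IntegrableOn f (Iic x))
    (x : ℝ) : HasDerivAt (fun u => ∫ y in Iic u, f y) (f x) x := by
  have hsplit :
      (fun u => ∫ y in Iic u, f y) = fun u => (∫ y in Iic 0, f y) + ∫ y in 0..u, f y := by
    funext u
    rw [← intervalIntegral.integral_Iic_sub_Iic (hint 0) (hint u), add_sub_cancel]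
  rw [hsplit]
  exact (hf.integral_hasStrictDerivAt 0 x).hasDerivAt.const_add _

section Kernel

variable {m : ℝ → ℝ} {M : ℝ}

lemma integrableOn_exp_sub_Iic (x : ℝ) : IntegrableOn (fun y => exp (y - x)) (Iic x) := by
  simp only [exp_sub]
  exact (integrableOn_exp_Iic x).div_const (exp x)

lemma integral_exp_sub_Iic (x : ℝ) : ∫ y in Iic x, exp (y - x) = 1 := by
  simp only [exp_sub, integral_div, integral_exp_Iic, div_self (exp_pos x).ne']

lemma integrableOn_exp_sub_mul_Iic (hm : Measurable m) (hM : ∀ y, |m y| ≤ M) (x : ℝ) :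
    IntegrableOn (fun y => exp (y - x) * m y) (Iic x) :=
  (integrableOn_exp_sub_Iic x).mul_bdd hm.aestronglyMeasurable (ae_of_all _ hM)

lemma integrableOn_exp_sub_mul_Ici (hm : Measurable m) (hM : ∀ y, |m y| ≤ M) (x : ℝ) :
    IntegrableOn (fun y => exp (x - y) * m y) (Ici x) := by
  have h := (integrableOn_exp_sub_mul_Iic (hm.comp measurable_neg) (fun y => hM (-y))
    (-x)).comp_neg_Ici
  simpa only [Function.comp_apply, neg_neg, sub_neg_eq_add, neg_add_eq_sub] using h

lemma abs_pPlus_le (hM : ∀ y, |m y| ≤ M) (x : ℝ) : |pPlus m x| ≤ M / 2 := by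
  have hint : |∫ y in Iic x, exp (y - x) * m y| ≤ M :=
    calc |∫ y in Iic x, exp (y - x) * m y|
        ≤ ∫ y in Iic x, exp (y - x) * M := by
          rw [← norm_eq_abs]
          refine norm_integral_le_of_norm_le ((integrableOn_exp_sub_Iic x).mul_const M) <|
            ae_of_all _ fun y => ?_
          rw [norm_mul, norm_of_nonneg (exp_pos _).le]
          exact mul_le_mul_of_nonneg_left (hM y) (exp_pos _).le
      _ = M := by rw [integral_mul_const, integral_exp_sub_Iic, one_mul]
  rw [pPlus, abs_mul, abs_of_pos one_half_pos]
  linarith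

lemma pMinus_eq_pPlus_comp_neg (m : ℝ → ℝ) (x : ℝ) :
    pMinus m x = pPlus (fun y => m (-y)) (-x) := by
  rw [pMinus, pPlus, integral_Ici_eq_integral_Ioi,
    ← integral_comp_neg_Ioi x (fun y => exp (y - -x) * m (-y))]
  simp only [neg_neg, sub_neg_eq_add, neg_add_eq_sub]

lemma abs_pMinus_le (hM : ∀ y, |m y| ≤ M) (x : ℝ) : |pMinus m x| ≤ M / 2 := by
  rw [pMinus_eq_pPlus_comp_neg]
  exact abs_pPlus_le (fun y => hM (-y)) (-x)

lemma pPlus_eq_exp_mul_integral (m : ℝ → ℝ) (x : ℝ) :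
    pPlus m x = exp (-x) / 2 * ∫ y in Iic x, exp y * m y := by
  have hsplit : ∀ y, exp (y - x) * m y = exp (-x) * (exp y * m y) := fun y => by
    rw [sub_eq_add_neg, exp_add]; ring
  simp_rw [pPlus, hsplit, integral_const_mul]
  ring

lemma hasDerivAt_pPlus_s3 (hm : Continuous m) (hM : ∀ y, |m y| ≤ M) (x : ℝ) :
    HasDerivAt (pPlus m) (m x / 2 - pPlus m x) x := by
  have hF := hasDerivAt_integral_Iic (f := fun y => exp y * m y) (continuous_exp.mul hm) (fun u =>
    (integrableOn_exp_Iic u).mul_bdd hm.aestronglyMeasurable (ae_of_all _ hM)) x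
  have hE : HasDerivAt (fun u => exp (-u) / 2) (-exp (-x) / 2) x := by
    simpa using ((hasDerivAt_neg x).exp).div_const 2
  refine ((hE.mul hF).congr_of_eventuallyEq
    (.of_forall (pPlus_eq_exp_mul_integral m))).congr_deriv ?_
  rw [pPlus_eq_exp_mul_integral, exp_neg]
  field_simp
  ring

lemma hasDerivAt_pMinus_s3 (hm : Continuous m) (hM : ∀ y, |m y| ≤ M) (x : ℝ) :
    HasDerivAt (pMinus m) (pMinus m x - m x / 2) x := by
  have h := (hasDerivAt_pPlus_s3 (m := fun y => m (-y)) (hm.comp continuous_neg)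
    (fun y => hM (-y)) (-x)).comp x (hasDerivAt_neg x)
  refine (h.congr_of_eventuallyEq (.of_forall (pMinus_eq_pPlus_comp_neg m))).congr_deriv ?_
  rw [pMinus_eq_pPlus_comp_neg, neg_neg]
  ring

lemma pConv_eq_pPlus_add_pMinus_s3 (hm : Measurable m) (hM : ∀ y, |m y| ≤ M) (x : ℝ) :
    pConv m x = pPlus m x + pMinus m x := by
  have hIic : EqOn (fun y => 1 / 2 * exp (-|x - y|) * m y)
      (fun y => 1 / 2 * (exp (y - x) * m y)) (Iic x) := fun y hy => by
    simp only [abs_of_nonneg (sub_nonneg.mpr (mem_Iic.mp hy)), neg_sub, mul_assoc]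
  have hIoi : EqOn (fun y => 1 / 2 * exp (-|x - y|) * m y)
      (fun y => 1 / 2 * (exp (x - y) * m y)) (Ioi x) := fun y hy => by
    simp only [abs_of_neg (sub_neg.mpr (mem_Ioi.mp hy)), neg_neg, mul_assoc]
  have hintIic := IntegrableOn.congr_fun ((integrableOn_exp_sub_mul_Iic hm hM x).const_mul _)
    hIic.symm measurableSet_Iic
  have hintIoi := IntegrableOn.congr_fun
    (((integrableOn_exp_sub_mul_Ici hm hM x).mono_set Ioi_subset_Ici_self).const_mul _)
    hIoi.symm measurableSet_Ioi
  rw [pConv, ← intervalIntegral.integral_Iic_add_Ioi hintIic hintIoi,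
    setIntegral_congr_fun measurableSet_Iic hIic, setIntegral_congr_fun measurableSet_Ioi hIoi,
    pPlus, pMinus, integral_Ici_eq_integral_Ioi, integral_const_mul, integral_const_mul]

lemma hasDerivAt_pConv (hm : Continuous m) (hM : ∀ y, |m y| ≤ M) (x : ℝ) :
    HasDerivAt (pConv m) (pMinus m x - pPlus m x) x := by
  refine (((hasDerivAt_pPlus_s3 hm hM x).add (hasDerivAt_pMinus_s3 hm hM x)).congr_of_eventuallyEq
    (.of_forall (pConv_eq_pPlus_add_pMinus_s3 hm.measurable hM))).congr_deriv ?_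
  ring

lemma deriv_pConv (hm : Continuous m) (hM : ∀ y, |m y| ≤ M) :
    deriv (pConv m) = pMinus m - pPlus m :=
  funext fun x => (hasDerivAt_pConv hm hM x).deriv

lemma deriv_deriv_pConv (hm : Continuous m) (hM : ∀ y, |m y| ≤ M) (x : ℝ) :
    deriv (deriv (pConv m)) x = pConv m x - m x := by
  rw [deriv_pConv hm hM, ((hasDerivAt_pMinus_s3 hm hM x).sub (hasDerivAt_pPlus_s3 hm hM x)).deriv,
    pConv_eq_pPlus_add_pMinus_s3 hm.measurable hM]
  ring

lemma abs_pConv_le (hm : Measurable m) (hM : ∀ y, |m y| ≤ M) (x : ℝ) : |pConv m x| ≤ M := by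
  rw [pConv_eq_pPlus_add_pMinus_s3 hm hM]
  linarith [abs_add_le (pPlus m x) (pMinus m x), abs_pPlus_le hM x, abs_pMinus_le hM x]

lemma abs_deriv_pConv_le (hm : Continuous m) (hM : ∀ y, |m y| ≤ M) (x : ℝ) :
    |deriv (pConv m) x| ≤ M := by
  rw [deriv_pConv hm hM, Pi.sub_apply]
  linarith [abs_sub (pMinus m x) (pPlus m x), abs_pPlus_le hM x, abs_pMinus_le hM x]

lemma abs_deriv_deriv_pConv_le (hm : Continuous m) (hM : ∀ y, |m y| ≤ M) (x : ℝ) :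
    |deriv (deriv (pConv m)) x| ≤ 2 * M := by
  rw [deriv_deriv_pConv hm hM]
  linarith [abs_sub (pConv m x) (m x), abs_pConv_le hm.measurable hM x, hM x]

end Kernel

theorem stmt3 (m : ℝ → ℝ) (hm : Continuous m) (hb : ∃ C, ∀ x, |m x| ≤ C) :
    (⨆ x : ℝ, |pConv m x|) ≤ (⨆ x : ℝ, |m x|) ∧
    (⨆ x : ℝ, |deriv (pConv m) x|) ≤ (⨆ x : ℝ, |m x|) ∧
    (⨆ x : ℝ, |deriv (deriv (pConv m)) x|) ≤ 2 * (⨆ x : ℝ, |m x|) ∧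
    (⨆ x : ℝ, |pConv m x|) + (⨆ x : ℝ, |deriv (pConv m) x|)
      + (⨆ x : ℝ, |deriv (deriv (pConv m)) x|) ≤ 4 * (⨆ x : ℝ, |m x|) := by
  obtain ⟨C, hC⟩ := hb
  have hM : ∀ y, |m y| ≤ ⨆ x, |m x| := le_ciSup ⟨C, forall_mem_range.mpr hC⟩
  have h0 := ciSup_le (abs_pConv_le hm.measurable hM)
  have h1 := ciSup_le (abs_deriv_pConv_le hm hM)
  have h2 := ciSup_le (abs_deriv_deriv_pConv_le hm hM)
  exact ⟨h0, h1, h2, by linarith⟩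
end

section
/- Let u : ℝ × ℝ → ℝ be smooth (all partial derivatives of all orders exist and are continuous), set m = u − u_{xx} and M = cos(u² − u_x²)·m·u_x, and suppose m_t + ∂ₓ[sin(u² − u_x²)·m] = 0 on ℝ × ℝ. Then for all (t,x): (1 − ∂ₓ²)[u_t + sin(u² − u_x²)·u_x](t,x) = −2·u(t,x)·M(t,x) − 2·∂ₓ(u_x·M)(t,x). -/
/-!
Write `W = u² - u_x²`, so that `W_x = 2 u_x m`. Then `∂ₓ(sin W · u_x) = 2 u_x M + sin W · u_xx`,
hence `(1 - ∂ₓ²)(sin W · u_x) = sin W · u_x - 2 ∂ₓ(u_x M) - ∂ₓ(sin W · u_xx)`. Commuting `∂ₜ` with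
`∂ₓ²`, the equation says `(1 - ∂ₓ²) u_t = -∂ₓ(sin W · u) + ∂ₓ(sin W · u_xx)`. In the sum the
`sin W · u_xx` terms cancel and `sin W · u_x - ∂ₓ(sin W · u) = -W_x cos W · u = -2 u M`.
-/

open MeasureTheory Real Set

/-- Spatial partial derivative `∂ₓ` of a function of `(t, x)`. -/
noncomputable def pdx (f : ℝ → ℝ → ℝ) : ℝ → ℝ → ℝ := fun t x => deriv (fun y => f t y) x

/-- Time partial derivative `∂ₜ` of a function of `(t, x)`. -/
noncomputable def pdt (f : ℝ → ℝ → ℝ) : ℝ → ℝ → ℝ := fun t x => deriv (fun s => f s x) t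

/-- The momentum density `m = u - u_{xx}`. -/
noncomputable def mF (u : ℝ → ℝ → ℝ) : ℝ → ℝ → ℝ := fun t x => u t x - pdx (pdx u) t x

/-- The blow-up quantity `M = cos(u² - u_x²) · m · u_x`. -/
noncomputable def MF (u : ℝ → ℝ → ℝ) : ℝ → ℝ → ℝ :=
  fun t x => Real.cos ((u t x) ^ 2 - (pdx u t x) ^ 2) * mF u t x * pdx u t x

open Function

section OneVariable

variable {f : ℝ → ℝ}

lemma hasDerivAt_sq_sub_deriv_sq {x : ℝ} (hf : DifferentiableAt ℝ f x)
    (hf' : DifferentiableAt ℝ (deriv f) x) :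
    HasDerivAt (fun y => f y ^ 2 - deriv f y ^ 2)
      (2 * deriv f x * (f x - deriv (deriv f) x)) x :=
  ((hf.hasDerivAt.fun_pow 2).fun_sub (hf'.hasDerivAt.fun_pow 2)).congr_deriv (by push_cast; ring)

lemma deriv_sin_sq_sub_deriv_sq_mul_deriv (hf : Differentiable ℝ f)
    (hf' : Differentiable ℝ (deriv f)) :
    deriv (fun y => sin (f y ^ 2 - deriv f y ^ 2) * deriv f y) = fun x =>
      2 * deriv f x * (cos (f x ^ 2 - deriv f x ^ 2) * (f x - deriv (deriv f) x) * deriv f x)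
        + sin (f x ^ 2 - deriv f x ^ 2) * deriv (deriv f) x := by
  funext x
  rw [((hasDerivAt_sq_sub_deriv_sq (hf x) (hf' x)).sin.fun_mul (hf' x).hasDerivAt).deriv]
  ring

theorem sineMCH_nonlocal_identity {g : ℝ → ℝ} (hf : ContDiff ℝ 3 f) (hg : ContDiff ℝ 2 g)
    {x : ℝ} (H : g x - deriv (deriv g) x
      + deriv (fun y => sin (f y ^ 2 - deriv f y ^ 2) * (f y - deriv (deriv f) y)) x = 0) :
    (g x + sin (f x ^ 2 - deriv f x ^ 2) * deriv f x)
      - deriv (deriv (fun y => g y + sin (f y ^ 2 - deriv f y ^ 2) * deriv f y)) x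
    = -2 * f x * (cos (f x ^ 2 - deriv f x ^ 2) * (f x - deriv (deriv f) x) * deriv f x)
      - 2 * deriv (fun y => deriv f y *
          (cos (f y ^ 2 - deriv f y ^ 2) * (f y - deriv (deriv f) y) * deriv f y)) x := by
  have hdf : Differentiable ℝ f := hf.differentiable (by norm_num)
  have hdf' : Differentiable ℝ (deriv f) := (hf.deriv' (n := 2)).differentiable (by norm_num)
  have hdf'' : Differentiable ℝ (deriv (deriv f)) :=
    ((hf.deriv' (n := 2)).deriv' (n := 1)).differentiable (by norm_num)
  have hdg : Differentiable ℝ g := hg.differentiable (by norm_num)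
  have hdg' : Differentiable ℝ (deriv g) := (hg.deriv' (n := 1)).differentiable (by norm_num)
  have hW := hasDerivAt_sq_sub_deriv_sq (hdf x) (hdf' x)
  have split_m : deriv (fun y => sin (f y ^ 2 - deriv f y ^ 2) * (f y - deriv (deriv f) y)) x
      = deriv (fun y => sin (f y ^ 2 - deriv f y ^ 2) * f y) x
        - deriv (fun y => sin (f y ^ 2 - deriv f y ^ 2) * deriv (deriv f) y) x := by
    simp only [mul_sub]
    exact deriv_fun_sub (by fun_prop) (by fun_prop)
  have h_sin_f : deriv (fun y => sin (f y ^ 2 - deriv f y ^ 2) * f y) x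
      = cos (f x ^ 2 - deriv f x ^ 2) * (2 * deriv f x * (f x - deriv (deriv f) x)) * f x
        + sin (f x ^ 2 - deriv f x ^ 2) * deriv f x :=
    (hW.sin.fun_mul (hdf x).hasDerivAt).deriv
  have h_second : deriv (deriv (fun y => g y + sin (f y ^ 2 - deriv f y ^ 2) * deriv f y)) x
      = deriv (deriv g) x
        + 2 * deriv (fun y => deriv f y *
          (cos (f y ^ 2 - deriv f y ^ 2) * (f y - deriv (deriv f) y) * deriv f y)) x
        + deriv (fun y => sin (f y ^ 2 - deriv f y ^ 2) * deriv (deriv f) y) x := by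
    have h_first : deriv (fun y => g y + sin (f y ^ 2 - deriv f y ^ 2) * deriv f y)
        = fun y => deriv g y + 2 * (deriv f y *
          (cos (f y ^ 2 - deriv f y ^ 2) * (f y - deriv (deriv f) y) * deriv f y))
          + sin (f y ^ 2 - deriv f y ^ 2) * deriv (deriv f) y := by
      funext y
      rw [deriv_fun_add (hdg y) (by fun_prop), deriv_sin_sq_sub_deriv_sq_mul_deriv hdf hdf']
      ring
    rw [h_first, deriv_fun_add (by fun_prop) (by fun_prop), deriv_fun_add (by fun_prop) (by fun_prop),
      deriv_const_mul _ (by fun_prop)]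
  rw [h_second]
  rw [split_m, h_sin_f] at H
  linear_combination H

end OneVariable

lemma fderiv_fderiv_apply {𝕜 E F : Type*} [NontriviallyNormedField 𝕜] [NormedAddCommGroup E]
    [NormedSpace 𝕜 E] [NormedAddCommGroup F] [NormedSpace 𝕜 F] {f : E → F} {x : E}
    (hf : DifferentiableAt 𝕜 (fderiv 𝕜 f) x) (v w : E) :
    fderiv 𝕜 (fun y => fderiv 𝕜 f y w) x v = fderiv 𝕜 (fderiv 𝕜 f) x v w := by
  rw [fderiv_clm_apply hf (differentiableAt_const w)]
  simp

section PartialDerivatives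

variable {u : ℝ → ℝ → ℝ}

lemma pdx_eq_fderiv {t x : ℝ} (hu : DifferentiableAt ℝ (uncurry u) (t, x)) :
    pdx u t x = fderiv ℝ (uncurry u) (t, x) (0, 1) :=
  (hu.hasFDerivAt.comp_hasDerivAt x
    ((hasDerivAt_const x t).prodMk (hasDerivAt_id x))).deriv

lemma pdt_eq_fderiv {t x : ℝ} (hu : DifferentiableAt ℝ (uncurry u) (t, x)) :
    pdt u t x = fderiv ℝ (uncurry u) (t, x) (1, 0) :=
  (hu.hasFDerivAt.comp_hasDerivAt (f := fun s => (s, x)) t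
    ((hasDerivAt_id' t).prodMk (hasDerivAt_const t x))).deriv

lemma uncurry_pdx (hu : Differentiable ℝ (uncurry u)) :
    uncurry (pdx u) = fun p => fderiv ℝ (uncurry u) p (0, 1) :=
  funext fun p => pdx_eq_fderiv (hu p)

lemma uncurry_pdt (hu : Differentiable ℝ (uncurry u)) :
    uncurry (pdt u) = fun p => fderiv ℝ (uncurry u) p (1, 0) :=
  funext fun p => pdt_eq_fderiv (hu p)

lemma contDiff_uncurry_pdx {m n : WithTop ℕ∞} (hmn : m + 1 ≤ n)
    (hu : ContDiff ℝ n (uncurry u)) : ContDiff ℝ m (uncurry (pdx u)) := by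
  rw [uncurry_pdx (hu.differentiable (one_pos.trans_le (le_add_self.trans hmn)).ne')]
  exact (hu.fderiv_right hmn).clm_apply contDiff_const

lemma contDiff_uncurry_pdt {m n : WithTop ℕ∞} (hmn : m + 1 ≤ n)
    (hu : ContDiff ℝ n (uncurry u)) : ContDiff ℝ m (uncurry (pdt u)) := by
  rw [uncurry_pdt (hu.differentiable (one_pos.trans_le (le_add_self.trans hmn)).ne')]
  exact (hu.fderiv_right hmn).clm_apply contDiff_const

lemma contDiff_apply_of_uncurry {n : WithTop ℕ∞} (hu : ContDiff ℝ n (uncurry u)) (t : ℝ) :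
    ContDiff ℝ n (u t) :=
  hu.comp (contDiff_const.prodMk contDiff_id)

lemma pdt_sub {v : ℝ → ℝ → ℝ} (hu : Differentiable ℝ (uncurry u))
    (hv : Differentiable ℝ (uncurry v)) :
    pdt (fun s y => u s y - v s y) = fun s y => pdt u s y - pdt v s y := by
  funext t x
  have slice {w : ℝ → ℝ → ℝ} (hw : Differentiable ℝ (uncurry w)) :
      DifferentiableAt ℝ (fun s => w s x) t :=
    (hw _).comp (f := fun s => (s, x)) t (differentiableAt_id.prodMk (differentiableAt_const x))
  exact deriv_fun_sub (slice hu) (slice hv)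

lemma pdt_pdx_comm (hu : ContDiff ℝ 2 (uncurry u)) : pdt (pdx u) = pdx (pdt u) := by
  funext t x
  have hu1 : Differentiable ℝ (uncurry u) := hu.differentiable two_ne_zero
  have hdu : Differentiable ℝ (fderiv ℝ (uncurry u)) :=
    (hu.fderiv_right (m := 1) (by norm_num)).differentiable one_ne_zero
  rw [pdt_eq_fderiv ((contDiff_uncurry_pdx (m := 1) (by norm_num) hu).differentiable one_ne_zero _),
    pdx_eq_fderiv ((contDiff_uncurry_pdt (m := 1) (by norm_num) hu).differentiable one_ne_zero _),
    uncurry_pdx hu1, uncurry_pdt hu1, fderiv_fderiv_apply (hdu _), fderiv_fderiv_apply (hdu _),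
    (hu.contDiffAt.isSymmSndFDerivAt (by simp)).eq]

lemma pdt_mF (hu : ContDiff ℝ 3 (uncurry u)) :
    pdt (mF u) = fun t x => pdt u t x - pdx (pdx (pdt u)) t x := by
  have hu1 : ContDiff ℝ 2 (uncurry (pdx u)) := contDiff_uncurry_pdx (by norm_num) hu
  have hu2 : ContDiff ℝ 1 (uncurry (pdx (pdx u))) := contDiff_uncurry_pdx (by norm_num) hu1
  unfold mF
  rw [pdt_sub (hu.differentiable (by norm_num)) (hu2.differentiable one_ne_zero),
    pdt_pdx_comm hu1, pdt_pdx_comm (hu.of_le (by norm_num))]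

end PartialDerivatives

theorem stmt7 (u : ℝ → ℝ → ℝ) (hu : ContDiff ℝ (⊤ : ℕ∞) (Function.uncurry u))
    (heq : ∀ t x : ℝ, pdt (mF u) t x
      + pdx (fun s y => Real.sin ((u s y) ^ 2 - (pdx u s y) ^ 2) * mF u s y) t x = 0) :
    ∀ t x : ℝ,
      (fun s y => pdt u s y + Real.sin ((u s y) ^ 2 - (pdx u s y) ^ 2) * pdx u s y) t x
        - pdx (pdx (fun s y => pdt u s y
            + Real.sin ((u s y) ^ 2 - (pdx u s y) ^ 2) * pdx u s y)) t x
      = -2 * u t x * MF u t x - 2 * pdx (fun s y => pdx u s y * MF u s y) t x := by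
  intro t x
  have hu3 : ContDiff ℝ 3 (uncurry u) := hu.of_le (by norm_cast)
  have hf : ContDiff ℝ 3 (u t) := contDiff_apply_of_uncurry hu3 t
  have hg : ContDiff ℝ 2 (pdt u t) :=
    contDiff_apply_of_uncurry (contDiff_uncurry_pdt (by norm_num) hu3) t
  refine sineMCH_nonlocal_identity hf hg ?_
  have hm := heq t x
  rw [pdt_mF hu3] at hm
  exact hm
end

section
/- Let T > 0 and let u : [0,T] × ℝ → ℝ be such that the partial derivatives u_x, u_{xx}, u_t, u_{tx}, u_{txx}, u_{xxx} exist and are continuous, and set m = u − u_{xx}. Suppose m_t + sin(u² − u_x²)·m_x = −2·cos(u² − u_x²)·u_x·m² on [0,T] × ℝ. Let x₀ ∈ ℝ and let q : [0,T] → ℝ be differentiable with q(0) = x₀ and q'(t) = sin(u(t,q(t))² − u_x(t,q(t))²) for all t. Then for all t ∈ [0,T]: m(t, q(t)) = m(0, x₀) · exp(−2·∫₀ᵗ [cos(u² − u_x²)·m·u_x](s, q(s)) ds). In particular, m(t,q(t)) is positive, zero, or negative exactly when m(0,x₀) is positive, zero, or negative, respectively. -/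
/-!
Along a characteristic `q` the equation `m_t + sin(u² - u_x²) m_x = -2 cos(u² - u_x²) u_x m²`
says exactly that `F(t) = m(t, q t)` solves the scalar linear ODE `F' = -2 M(t, q t) F` with
`M = cos(u² - u_x²) m u_x`. Multiplying by the integrating factor `exp (2 ∫₀ᵗ M)` gives a function
with zero derivative, which yields the formula; the sign statements follow since `exp > 0`.
-/

open MeasureTheory Real Set

theorem hasDerivAt_comp_of_continuous_partials {f ft fx : ℝ → ℝ → ℝ} {q : ℝ → ℝ} {q' t : ℝ}
    (hft : ∀ s y, HasDerivAt (f · y) (ft s y) s) (hfx : ∀ s y, HasDerivAt (f s ·) (fx s y) y)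
    (hct : ContinuousAt (Function.uncurry ft) (t, q t))
    (hcx : ContinuousAt (Function.uncurry fx) (t, q t)) (hq : HasDerivAt q q' t) :
    HasDerivAt (fun s => f s (q s)) (ft t (q t) + q' * fx t (q t)) t := by
  have hf : HasFDerivAt (Function.uncurry f)
      ((ContinuousLinearMap.toSpanSingleton ℝ (ft t (q t))).coprod
        (ContinuousLinearMap.toSpanSingleton ℝ (fx t (q t)))) (t, q t) :=
    (hasStrictFDerivAt_uncurry_coprod
      (f₁ := fun s y => ContinuousLinearMap.toSpanSingleton ℝ (ft s y))
      (f₂ := fun s y => ContinuousLinearMap.toSpanSingleton ℝ (fx s y))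
      (.of_forall fun p => (hft p.1 p.2).hasFDerivAt)
      (.of_forall fun p => (hfx p.1 p.2).hasFDerivAt)
      (ContinuousLinearMap.toSpanSingletonCLE.continuous.continuousAt.comp hct)
      (ContinuousLinearMap.toSpanSingletonCLE.continuous.continuousAt.comp hcx)).hasFDerivAt
  refine (hf.comp_hasDerivAt t ((hasDerivAt_id t).prodMk hq)).congr_deriv ?_
  simp [mul_comm]

theorem eq_mul_exp_integral_of_hasDerivWithinAt {F a : ℝ → ℝ} {t₀ T : ℝ}
    (ha : ContinuousOn a (Icc t₀ T))
    (hF : ∀ t ∈ Icc t₀ T, HasDerivWithinAt F (a t * F t) (Icc t₀ T) t) :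
    ∀ t ∈ Icc t₀ T, F t = F t₀ * exp (∫ s in t₀..t, a s) := by
  set I := fun t => ∫ s in t₀..t, a s
  have hI : ∀ t ∈ Icc t₀ T, HasDerivWithinAt I (a t) (Icc t₀ T) t := by
    intro t ht
    have : Fact (t ∈ Icc t₀ T) := ⟨ht⟩
    exact intervalIntegral.integral_hasDerivWithinAt_right
      ((ha.mono (uIcc_subset_Icc (left_mem_Icc.2 (ht.1.trans ht.2)) ht)).intervalIntegrable)
      (ha.stronglyMeasurableAtFilter_nhdsWithin measurableSet_Icc t) (ha t ht)
  have hG : ∀ t ∈ Icc t₀ T, HasDerivWithinAt (fun t => F t * exp (-I t)) 0 (Icc t₀ T) t := by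
    intro t ht
    refine ((hF t ht).mul (hI t ht).neg.exp).congr_deriv ?_
    ring
  have hconst := constant_of_has_deriv_right_zero (fun t ht => (hG t ht).continuousWithinAt)
    fun t ht => (hG t (Ico_subset_Icc_self ht)).mono_of_mem_nhdsWithin (Icc_mem_nhdsGE_of_mem ht)
  intro t ht
  calc F t = F t * exp (-I t) * exp (I t) := by
        rw [mul_assoc, ← exp_add, neg_add_cancel, exp_zero, mul_one]
    _ = F t₀ * exp (I t) := by simp [hconst t ht, I]

section SineMCH

variable {u : ℝ → ℝ → ℝ}

theorem hasDerivAt_mF_time (hut : ∀ x, Differentiable ℝ (fun s => u s x))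
    (hutxx : ∀ x, Differentiable ℝ (fun s => pdx (pdx u) s x)) (t x : ℝ) :
    HasDerivAt (fun s => mF u s x) (pdt u t x - pdt (pdx (pdx u)) t x) t :=
  (hut x t).hasDerivAt.sub (hutxx x t).hasDerivAt

theorem hasDerivAt_mF_space (hux : ∀ t, Differentiable ℝ (fun y => u t y))
    (huxxx : ∀ t, Differentiable ℝ (fun y => pdx (pdx u) t y)) (t x : ℝ) :
    HasDerivAt (fun y => mF u t y) (pdx u t x - pdx (pdx (pdx u)) t x) x :=
  (hux t x).hasDerivAt.sub (huxxx t x).hasDerivAt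

theorem continuous_uncurry_MF (hc : Continuous (Function.uncurry u))
    (hcx : Continuous (Function.uncurry (pdx u)))
    (hcxx : Continuous (Function.uncurry (pdx (pdx u)))) :
    Continuous (Function.uncurry (MF u)) :=
  (continuous_cos.comp ((hc.pow 2).sub (hcx.pow 2))).mul (hc.sub hcxx) |>.mul hcx

theorem hasDerivAt_mF_comp_characteristic (hux : ∀ t, Differentiable ℝ (fun y => u t y))
    (huxxx : ∀ t, Differentiable ℝ (fun y => pdx (pdx u) t y))
    (hut : ∀ x, Differentiable ℝ (fun s => u s x))
    (hutxx : ∀ x, Differentiable ℝ (fun s => pdx (pdx u) s x))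
    (hcx : Continuous (Function.uncurry (pdx u)))
    (hcxxx : Continuous (Function.uncurry (pdx (pdx (pdx u)))))
    (hct : Continuous (Function.uncurry (pdt u)))
    (hctxx : Continuous (Function.uncurry (pdt (pdx (pdx u))))) {q : ℝ → ℝ} {t : ℝ}
    (hpde : pdt (mF u) t (q t) + sin (u t (q t) ^ 2 - pdx u t (q t) ^ 2) * pdx (mF u) t (q t)
      = -2 * cos (u t (q t) ^ 2 - pdx u t (q t) ^ 2) * pdx u t (q t) * mF u t (q t) ^ 2)
    (hq : HasDerivAt q (sin (u t (q t) ^ 2 - pdx u t (q t) ^ 2)) t) :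
    HasDerivAt (fun s => mF u s (q s)) (-2 * MF u t (q t) * mF u t (q t)) t := by
  have hmt : pdt (mF u) t (q t) = pdt u t (q t) - pdt (pdx (pdx u)) t (q t) :=
    (hasDerivAt_mF_time hut hutxx t (q t)).deriv
  have hmx : pdx (mF u) t (q t) = pdx u t (q t) - pdx (pdx (pdx u)) t (q t) :=
    (hasDerivAt_mF_space hux huxxx t (q t)).deriv
  refine (hasDerivAt_comp_of_continuous_partials (hasDerivAt_mF_time hut hutxx)
    (hasDerivAt_mF_space hux huxxx) (hct.sub hctxx).continuousAt (hcx.sub hcxxx).continuousAt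
    hq).congr_deriv ?_
  rw [← hmt, ← hmx, hpde, MF]
  ring

end SineMCH

theorem stmt11_general (T : ℝ) (u : ℝ → ℝ → ℝ)
    -- existence of the partial derivatives u_x, u_xx, u_xxx, u_t, u_tx, u_txx
    (hux : ∀ t : ℝ, Differentiable ℝ (fun y => u t y))
    (huxxx : ∀ t : ℝ, Differentiable ℝ (fun y => pdx (pdx u) t y))
    (hut : ∀ x : ℝ, Differentiable ℝ (fun s => u s x))
    (hutxx : ∀ x : ℝ, Differentiable ℝ (fun s => pdx (pdx u) s x))
    -- continuity of u and of these partial derivatives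
    (hc : Continuous (Function.uncurry u))
    (hcx : Continuous (Function.uncurry (pdx u)))
    (hcxx : Continuous (Function.uncurry (pdx (pdx u))))
    (hcxxx : Continuous (Function.uncurry (pdx (pdx (pdx u)))))
    (hct : Continuous (Function.uncurry (pdt u)))
    (hctxx : Continuous (Function.uncurry (pdt (pdx (pdx u)))))
    -- the sine-mCH equation: m_t + sin(u² - u_x²)·m_x = -2·cos(u² - u_x²)·u_x·m²
    (heq : ∀ t ∈ Set.Icc (0 : ℝ) T, ∀ x : ℝ,
      pdt (mF u) t x + Real.sin ((u t x) ^ 2 - (pdx u t x) ^ 2) * pdx (mF u) t x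
        = -2 * Real.cos ((u t x) ^ 2 - (pdx u t x) ^ 2) * pdx u t x * (mF u t x) ^ 2)
    (x₀ : ℝ) (q : ℝ → ℝ) (hq0 : q 0 = x₀)
    (hq : ∀ t ∈ Set.Icc (0 : ℝ) T,
      HasDerivAt q (Real.sin ((u t (q t)) ^ 2 - (pdx u t (q t)) ^ 2)) t) :
    ∀ t ∈ Set.Icc (0 : ℝ) T,
      mF u t (q t) = mF u 0 x₀ * Real.exp (-2 * ∫ s in (0 : ℝ)..t,
          Real.cos ((u s (q s)) ^ 2 - (pdx u s (q s)) ^ 2) * mF u s (q s) * pdx u s (q s)) ∧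
      (0 < mF u 0 x₀ → 0 < mF u t (q t)) ∧
      (mF u 0 x₀ = 0 → mF u t (q t) = 0) ∧
      (mF u 0 x₀ < 0 → mF u t (q t) < 0) := by
  intro t ht
  have hcurve : ContinuousOn (fun s => (s, q s)) (Icc 0 T) :=
    (continuousOn_id' _).prodMk fun s hs => (hq s hs).continuousAt.continuousWithinAt
  have hM : ContinuousOn (fun s => -2 * MF u s (q s)) (Icc 0 T) := by
    have hMq := (continuous_uncurry_MF hc hcx hcxx).comp_continuousOn hcurve
    exact continuousOn_const.mul hMq
  have hm (s : ℝ) (hs : s ∈ Icc 0 T) : HasDerivWithinAt (fun s => mF u s (q s))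
      (-2 * MF u s (q s) * mF u s (q s)) (Icc 0 T) s :=
    (hasDerivAt_mF_comp_characteristic hux huxxx hut hutxx hcx hcxxx hct hctxx
      (heq s hs (q s)) (hq s hs)).hasDerivWithinAt
  have hformula := eq_mul_exp_integral_of_hasDerivWithinAt hM hm t ht
  rw [intervalIntegral.integral_const_mul, hq0] at hformula
  refine ⟨hformula, fun h0 => ?_, fun h0 => ?_, fun h0 => ?_⟩ <;> rw [hformula]
  · positivity
  · rw [h0, zero_mul]
  · exact mul_neg_of_neg_of_pos h0 (exp_pos _)

theorem stmt11 (T : ℝ) (hT : 0 < T) (u : ℝ → ℝ → ℝ)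
    -- existence of the partial derivatives u_x, u_xx, u_xxx, u_t, u_tx, u_txx
    (hux : ∀ t : ℝ, Differentiable ℝ (fun y => u t y))
    (huxx : ∀ t : ℝ, Differentiable ℝ (fun y => pdx u t y))
    (huxxx : ∀ t : ℝ, Differentiable ℝ (fun y => pdx (pdx u) t y))
    (hut : ∀ x : ℝ, Differentiable ℝ (fun s => u s x))
    (hutx : ∀ x : ℝ, Differentiable ℝ (fun s => pdx u s x))
    (hutxx : ∀ x : ℝ, Differentiable ℝ (fun s => pdx (pdx u) s x))
    -- continuity of u and of these partial derivatives
    (hc : Continuous (Function.uncurry u))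
    (hcx : Continuous (Function.uncurry (pdx u)))
    (hcxx : Continuous (Function.uncurry (pdx (pdx u))))
    (hcxxx : Continuous (Function.uncurry (pdx (pdx (pdx u)))))
    (hct : Continuous (Function.uncurry (pdt u)))
    (hctx : Continuous (Function.uncurry (pdt (pdx u))))
    (hctxx : Continuous (Function.uncurry (pdt (pdx (pdx u)))))
    -- the sine-mCH equation: m_t + sin(u² - u_x²)·m_x = -2·cos(u² - u_x²)·u_x·m²
    (heq : ∀ t ∈ Set.Icc (0 : ℝ) T, ∀ x : ℝ,
      pdt (mF u) t x + Real.sin ((u t x) ^ 2 - (pdx u t x) ^ 2) * pdx (mF u) t x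
        = -2 * Real.cos ((u t x) ^ 2 - (pdx u t x) ^ 2) * pdx u t x * (mF u t x) ^ 2)
    (x₀ : ℝ) (q : ℝ → ℝ) (hq0 : q 0 = x₀)
    (hq : ∀ t ∈ Set.Icc (0 : ℝ) T,
      HasDerivAt q (Real.sin ((u t (q t)) ^ 2 - (pdx u t (q t)) ^ 2)) t) :
    ∀ t ∈ Set.Icc (0 : ℝ) T,
      mF u t (q t) = mF u 0 x₀ * Real.exp (-2 * ∫ s in (0 : ℝ)..t,
          Real.cos ((u s (q s)) ^ 2 - (pdx u s (q s)) ^ 2) * mF u s (q s) * pdx u s (q s)) ∧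
      (0 < mF u 0 x₀ → 0 < mF u t (q t)) ∧
      (mF u 0 x₀ = 0 → mF u t (q t) = 0) ∧
      (mF u 0 x₀ < 0 → mF u t (q t) < 0) :=
  stmt11_general T u hux huxxx hut hutxx hc hcx hcxx hcxxx hct hctxx heq x₀ q hq0 hq
end

section
/- Let T > 0 and let u : [0,T] × ℝ → ℝ have continuous partial derivatives u_x, u_{xx}, u_{xxx}, with m = u − u_{xx}. Let q : [0,T] × ℝ → ℝ be twice continuously differentiable with q(0,x) = x and ∂_t q(t,x) = sin(u(t,q(t,x))² − u_x(t,q(t,x))²) for all (t,x). Then for all (t,x) ∈ [0,T] × ℝ: ∂ₓ q(t,x) = exp(2·∫₀ᵗ [cos(u² − u_x²)·m·u_x](s, q(s,x)) ds) > 0. -/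
open MeasureTheory Real Set

/-! Differentiating the characteristic equation in `x` and using the symmetry of the mixed second
derivatives of `q`, the stretch `w = ∂ₓq` along a characteristic solves the linear equation
`∂ₜw = 2 M(t, q) w` with `w(0) = 1`, where `M = cos(u² - u_x²) m u_x`. The integrating factor
`exp(-2 ∫ M)` makes `w · exp(-2 ∫ M)` constant, so `w = exp(2 ∫ M) > 0`. -/

section PartialDerivatives

variable {E : Type*} [NormedAddCommGroup E] [NormedSpace ℝ E]

theorem HasFDerivAt.hasDerivAt_fst_slice {f : ℝ × ℝ → E} {f' : ℝ × ℝ →L[ℝ] E} {t x : ℝ}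
    (hf : HasFDerivAt f f' (t, x)) : HasDerivAt (fun s => f (s, x)) (f' (1, 0)) t := by
  exact (hf.comp t (hasFDerivAt_prodMk_left t x)).hasDerivAt

theorem HasFDerivAt.hasDerivAt_snd_slice {f : ℝ × ℝ → E} {f' : ℝ × ℝ →L[ℝ] E} {t x : ℝ}
    (hf : HasFDerivAt f f' (t, x)) : HasDerivAt (fun y => f (t, y)) (f' (0, 1)) x := by
  exact (hf.comp x (hasFDerivAt_prodMk_right t x)).hasDerivAt

theorem hasDerivAt_pdx_of_contDiff_two {q : ℝ → ℝ → ℝ} (hq : ContDiff ℝ 2 (Function.uncurry q))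
    (t x : ℝ) : HasDerivAt (fun s => pdx q s x) (pdx (pdt q) t x) t := by
  set F := Function.uncurry q
  have hF : ∀ p, HasFDerivAt F (fderiv ℝ F p) p := fun p =>
    (hq.differentiable (by norm_num) p).hasFDerivAt
  have hF' : HasFDerivAt (fderiv ℝ F) (fderiv ℝ (fderiv ℝ F) (t, x)) (t, x) :=
    ((hq.fderiv_right (m := 1) (by norm_num)).differentiable one_ne_zero _).hasFDerivAt
  have hpdx : (fun s => pdx q s x) = fun s => fderiv ℝ F (s, x) (0, 1) :=
    funext fun s => (hF (s, x)).hasDerivAt_snd_slice.deriv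
  have hpdt : (fun y => pdt q t y) = fun y => fderiv ℝ F (t, y) (1, 0) :=
    funext fun y => (hF (t, y)).hasDerivAt_fst_slice.deriv
  have hxt : HasDerivAt (fun y => fderiv ℝ F (t, y) (1, 0))
      (fderiv ℝ (fderiv ℝ F) (t, x) (0, 1) (1, 0)) x := by
    simpa using hF'.hasDerivAt_snd_slice.clm_apply (hasDerivAt_const x ((1 : ℝ), (0 : ℝ)))
  have htx : HasDerivAt (fun s => fderiv ℝ F (s, x) (0, 1))
      (fderiv ℝ (fderiv ℝ F) (t, x) (1, 0) (0, 1)) t := by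
    simpa using hF'.hasDerivAt_fst_slice.clm_apply (hasDerivAt_const t ((0 : ℝ), (1 : ℝ)))
  rw [hpdx, show pdx (pdt q) t x = deriv (fun y => pdt q t y) x from rfl, hpdt, hxt.deriv,
    second_derivative_symmetric hF hF']
  exact htx

end PartialDerivatives

theorem hasDerivAt_sin_sq_sub_deriv_sq {f : ℝ → ℝ} {x : ℝ} (hf : DifferentiableAt ℝ f x)
    (hf' : DifferentiableAt ℝ (deriv f) x) :
    HasDerivAt (fun y => sin (f y ^ 2 - deriv f y ^ 2))
      (2 * (cos (f x ^ 2 - deriv f x ^ 2) * (f x - deriv (deriv f) x) * deriv f x)) x := by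
  refine ((hf.hasDerivAt.pow 2).sub (hf'.hasDerivAt.pow 2)).sin.congr_deriv ?_
  simp only [Pi.sub_apply, Pi.pow_apply]
  ring

theorem continuous_MF {u : ℝ → ℝ → ℝ} (hc : Continuous (Function.uncurry u))
    (hcx : Continuous (Function.uncurry (pdx u)))
    (hcxx : Continuous (Function.uncurry (pdx (pdx u)))) :
    Continuous (Function.uncurry (MF u)) :=
  ((continuous_cos.comp ((hc.pow 2).sub (hcx.pow 2))).mul (hc.sub hcxx)).mul hcx

theorem eq_mul_exp_integral_of_hasDerivAt {w c : ℝ → ℝ} {a b : ℝ} (hc : Continuous c)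
    (hw : ∀ s ∈ Icc a b, HasDerivAt w (c s * w s) s) :
    ∀ t ∈ Icc a b, w t = w a * exp (∫ s in a..t, c s) := by
  set I : ℝ → ℝ := fun t => ∫ s in a..t, c s
  have hI : ∀ s, HasDerivAt I (c s) s := fun s =>
    intervalIntegral.integral_hasDerivAt_right (hc.intervalIntegrable a s)
      (hc.stronglyMeasurableAtFilter _ _) hc.continuousAt
  have hderiv : ∀ s ∈ Icc a b, HasDerivAt (fun s => w s * exp (-I s)) 0 s := by
    intro s hs
    refine ((hw s hs).mul (hI s).neg.exp).congr_deriv ?_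
    simp only [Pi.neg_apply]
    ring
  have hconst := constant_of_has_deriv_right_zero
    (fun s hs => (hderiv s hs).continuousAt.continuousWithinAt)
    (fun s hs => (hderiv s (Ico_subset_Icc_self hs)).hasDerivWithinAt)
  intro t ht
  have := hconst t ht
  simp only [I, intervalIntegral.integral_same, neg_zero, exp_zero, mul_one] at this
  rw [← this, mul_assoc, ← exp_add, neg_add_cancel, exp_zero, mul_one]

theorem stmt12_general (T : ℝ) (u : ℝ → ℝ → ℝ)
    -- existence of the partial derivatives u_x, u_xx, u_xxx
    (hux : ∀ t : ℝ, Differentiable ℝ (fun y => u t y))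
    (huxx : ∀ t : ℝ, Differentiable ℝ (fun y => pdx u t y))
    -- continuity of u and of these partial derivatives
    (hc : Continuous (Function.uncurry u))
    (hcx : Continuous (Function.uncurry (pdx u)))
    (hcxx : Continuous (Function.uncurry (pdx (pdx u))))
    -- the characteristics: q twice continuously differentiable, q(0,x) = x,
    -- ∂ₜq(t,x) = sin(u(t,q)² - u_x(t,q)²)
    (q : ℝ → ℝ → ℝ) (hq : ContDiff ℝ 2 (Function.uncurry q))
    (hq0 : ∀ x : ℝ, q 0 x = x)
    (hqt : ∀ t ∈ Set.Icc (0 : ℝ) T, ∀ x : ℝ,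
      HasDerivAt (fun s => q s x)
        (Real.sin ((u t (q t x)) ^ 2 - (pdx u t (q t x)) ^ 2)) t) :
    ∀ t ∈ Set.Icc (0 : ℝ) T, ∀ x : ℝ,
      pdx q t x = Real.exp (2 * ∫ s in (0 : ℝ)..t,
          Real.cos ((u s (q s x)) ^ 2 - (pdx u s (q s x)) ^ 2)
            * mF u s (q s x) * pdx u s (q s x)) ∧
      0 < pdx q t x := by
  intro t ht x
  have hqx : ∀ s, HasDerivAt (fun y => q s y) (pdx q s x) x := fun s =>
    ((hq.differentiable (by norm_num)).comp (differentiable_const s |>.prodMk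
      differentiable_id) x).hasDerivAt
  have hode : ∀ s ∈ Icc 0 T,
      HasDerivAt (fun s => pdx q s x) (2 * MF u s (q s x) * pdx q s x) s := by
    intro s hs
    have hpdt : (fun y => pdt q s y) = fun y => sin (u s (q s y) ^ 2 - pdx u s (q s y) ^ 2) :=
      funext fun y => (hqt s hs y).deriv
    have hsin : HasDerivAt (fun y => sin (u s (q s y) ^ 2 - pdx u s (q s y) ^ 2))
        (2 * MF u s (q s x) * pdx q s x) x := by
      refine ((hasDerivAt_sin_sq_sub_deriv_sq (hux s _) (huxx s _)).comp x (hqx s)).congr_deriv ?_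
      simp only [MF, mF, pdx]
    have h := hasDerivAt_pdx_of_contDiff_two hq s x
    rwa [show pdx (pdt q) s x = deriv (fun y => pdt q s y) x from rfl, hpdt, hsin.deriv] at h
  have hchar : Continuous fun s => (s, q s x) :=
    continuous_id.prodMk (hq.continuous.comp (continuous_id.prodMk continuous_const))
  have hM := (continuous_MF hc hcx hcxx).comp hchar
  have hsol := eq_mul_exp_integral_of_hasDerivAt (c := fun s => 2 * MF u s (q s x))
    (continuous_const.mul hM) hode t ht
  have hinit : pdx q 0 x = 1 := by simp [pdx, hq0]
  rw [hinit, one_mul, intervalIntegral.integral_const_mul] at hsol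
  exact ⟨hsol, hsol ▸ exp_pos _⟩

theorem stmt12 (T : ℝ) (hT : 0 < T) (u : ℝ → ℝ → ℝ)
    -- existence of the partial derivatives u_x, u_xx, u_xxx
    (hux : ∀ t : ℝ, Differentiable ℝ (fun y => u t y))
    (huxx : ∀ t : ℝ, Differentiable ℝ (fun y => pdx u t y))
    (huxxx : ∀ t : ℝ, Differentiable ℝ (fun y => pdx (pdx u) t y))
    -- continuity of u and of these partial derivatives
    (hc : Continuous (Function.uncurry u))
    (hcx : Continuous (Function.uncurry (pdx u)))
    (hcxx : Continuous (Function.uncurry (pdx (pdx u))))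
    (hcxxx : Continuous (Function.uncurry (pdx (pdx (pdx u)))))
    -- the characteristics: q twice continuously differentiable, q(0,x) = x,
    -- ∂ₜq(t,x) = sin(u(t,q)² - u_x(t,q)²)
    (q : ℝ → ℝ → ℝ) (hq : ContDiff ℝ 2 (Function.uncurry q))
    (hq0 : ∀ x : ℝ, q 0 x = x)
    (hqt : ∀ t ∈ Set.Icc (0 : ℝ) T, ∀ x : ℝ,
      HasDerivAt (fun s => q s x)
        (Real.sin ((u t (q t x)) ^ 2 - (pdx u t (q t x)) ^ 2)) t) :
    ∀ t ∈ Set.Icc (0 : ℝ) T, ∀ x : ℝ,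
      pdx q t x = Real.exp (2 * ∫ s in (0 : ℝ)..t,
          Real.cos ((u s (q s x)) ^ 2 - (pdx u s (q s x)) ^ 2)
            * mF u s (q s x) * pdx u s (q s x)) ∧
      0 < pdx q t x :=
  stmt12_general T u hux huxx hc hcx hcxx q hq hq0 hqt
end

section
/- Let T > 0, u, m, x₀ and q be as follows: u : [0,T] × ℝ → ℝ has continuous partial derivatives u_x, u_{xx}, u_t, u_{tx}, u_{txx}, u_{xxx}; m = u − u_{xx} satisfies m_t + sin(u² − u_x²)·m_x = −2·cos(u² − u_x²)·u_x·m²; q : [0,T] → ℝ is differentiable with q(0) = x₀ and q'(t) = sin(u(t,q(t))² − u_x(t,q(t))²). Suppose in addition there is K ≥ 0 such that cos(u(t,x)² − u_x(t,x)²)·u_x(t,x)·m(t,x) ≥ −K/2 for all (t,x) ∈ [0,T] × ℝ. Then |m(t, q(t))| ≤ e^{K·t}·|m(0, x₀)| for all t ∈ [0,T]. -/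
open MeasureTheory Real Set

/-! By the chain rule and the equation, `h(t) = m(t, q(t))` satisfies `h' = -2 M h` with
`M = cos(u² - u_x²)·m·u_x ≥ -K/2`. Grönwall's inequality for `h²`, whose derivative `-4 M h²`
is at most `2K h²`, then gives `h(t)² ≤ e^{2Kt} h(0)²`. -/

open Asymptotics Filter Topology Metric

theorem hasDerivAt_along_curve {F : Type*} [NormedAddCommGroup F] [NormedSpace ℝ F]
    {f f' : ℝ → ℝ → F} {γ : ℝ → ℝ} {t v : ℝ} {a : F}
    (hft : HasDerivAt (fun s => f s (γ t)) a t)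
    (hfx : ∀ᶠ p in 𝓝 (t, γ t), HasDerivAt (f p.1) (f' p.1 p.2) p.2)
    (hf' : ContinuousAt (Function.uncurry f') (t, γ t))
    (hγ : HasDerivAt γ v t) :
    HasDerivAt (fun s => f s (γ s)) (a + v • f' t (γ t)) t := by
  set c := f' t (γ t)
  have hrem : (fun s => f s (γ s) - f s (γ t) - (γ s - γ t) • c) =o[𝓝 t]
      (fun s => γ s - γ t) := by
    -- mean value inequality for `y ↦ f s y - y • c` on a ball where `f'` is `ε`-close to `c`
    refine isLittleO_iff.mpr fun ε hε => ?_
    obtain ⟨δ, hδ, hnear⟩ := eventually_nhds_iff_ball.mp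
      (hfx.and (hf'.eventually (ball_mem_nhds c hε)))
    filter_upwards [ball_mem_nhds t hδ, hγ.continuousAt (ball_mem_nhds (γ t) hδ)]
      with s hs hγs
    have hnear' : ∀ y ∈ ball (γ t) δ, HasDerivAt (f s) (f' s y) y ∧ ‖f' s y - c‖ < ε :=
      fun y hy => by
        simpa [dist_eq_norm] using hnear (s, y) (by simpa [Prod.dist_eq] using ⟨hs, hy⟩)
    have := (convex_ball (γ t) δ).norm_image_sub_le_of_norm_hasDerivWithin_le
      (f := fun y => f s y - y • c) (f' := fun y => f' s y - c)
      (fun y hy => by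
        simpa using ((hnear' y hy).1.fun_sub ((hasDerivAt_id y).smul_const c)).hasDerivWithinAt)
      (fun y hy => (hnear' y hy).2.le) (mem_ball_self hδ) hγs
    convert this using 2
    simp only [sub_smul]; abel
  have hremDeriv : HasDerivAt (fun s => f s (γ s) - f s (γ t) - (γ s - γ t) • c) 0 t := by
    rw [hasDerivAt_iff_isLittleO]
    simpa using hrem.trans_isBigO hγ.isBigO_sub
  convert (hremDeriv.add hft).add ((hγ.sub_const (γ t)).smul_const c) using 1
  · ext s; simp only [Pi.add_apply]; abel
  · simp

theorem abs_le_exp_mul_abs_of_hasDerivAt_mul_self {f g : ℝ → ℝ} {a b K : ℝ}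
    (hf : ∀ t ∈ Icc a b, HasDerivAt f (g t * f t) t) (hg : ∀ t ∈ Icc a b, g t ≤ K) :
    ∀ t ∈ Icc a b, |f t| ≤ exp (K * (t - a)) * |f a| := by
  have hsq : ∀ t ∈ Icc a b, HasDerivAt (fun s => f s ^ 2) (2 * g t * f t ^ 2) t := fun t ht =>
    ((hf t ht).fun_pow 2).congr_deriv (by push_cast; ring)
  have hgronwall := le_gronwallBound_of_liminf_deriv_right_le (δ := f a ^ 2) (K := 2 * K) (ε := 0)
    (fun t ht => (hsq t ht).continuousAt.continuousWithinAt)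
    (fun t ht _ hr => (hsq t (Ico_subset_Icc_self ht)).hasDerivWithinAt.liminf_right_slope_le hr)
    le_rfl
    (fun t ht => by
      have := mul_le_mul_of_nonneg_right (hg t (Ico_subset_Icc_self ht)) (sq_nonneg (f t))
      linarith)
  intro t ht
  have hbound : f t ^ 2 ≤ (exp (K * (t - a)) * |f a|) ^ 2 := by
    calc f t ^ 2 ≤ f a ^ 2 * exp (2 * K * (t - a)) := by
          simpa [gronwallBound_ε0] using hgronwall t ht
      _ = (exp (K * (t - a)) * |f a|) ^ 2 := by
          rw [mul_pow, sq_abs, ← exp_nat_mul]; push_cast; ring_nf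
  simpa [abs_of_nonneg (by positivity : 0 ≤ exp (K * (t - a)) * |f a|)] using sq_le_sq.mp hbound

theorem stmt13_general (T : ℝ) (u : ℝ → ℝ → ℝ)
    -- existence of the partial derivatives u_x, u_xx, u_xxx, u_t, u_tx, u_txx
    (hux : ∀ t : ℝ, Differentiable ℝ (fun y => u t y))
    (huxxx : ∀ t : ℝ, Differentiable ℝ (fun y => pdx (pdx u) t y))
    (hut : ∀ x : ℝ, Differentiable ℝ (fun s => u s x))
    (hutxx : ∀ x : ℝ, Differentiable ℝ (fun s => pdx (pdx u) s x))
    -- continuity of u and of these partial derivatives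
    (hcx : Continuous (Function.uncurry (pdx u)))
    (hcxxx : Continuous (Function.uncurry (pdx (pdx (pdx u)))))
    -- the sine-mCH equation: m_t + sin(u² - u_x²)·m_x = -2·cos(u² - u_x²)·u_x·m²
    (heq : ∀ t ∈ Set.Icc (0 : ℝ) T, ∀ x : ℝ,
      pdt (mF u) t x + Real.sin ((u t x) ^ 2 - (pdx u t x) ^ 2) * pdx (mF u) t x
        = -2 * Real.cos ((u t x) ^ 2 - (pdx u t x) ^ 2) * pdx u t x * (mF u t x) ^ 2)
    (x₀ : ℝ) (q : ℝ → ℝ) (hq0 : q 0 = x₀)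
    (hq : ∀ t ∈ Set.Icc (0 : ℝ) T,
      HasDerivAt q (Real.sin ((u t (q t)) ^ 2 - (pdx u t (q t)) ^ 2)) t)
    -- the lower bound  cos(u² - u_x²)·u_x·m ≥ -K/2
    (K : ℝ)
    (hbound : ∀ t ∈ Set.Icc (0 : ℝ) T, ∀ x : ℝ,
      -(K / 2) ≤ Real.cos ((u t x) ^ 2 - (pdx u t x) ^ 2) * pdx u t x * mF u t x) :
    ∀ t ∈ Set.Icc (0 : ℝ) T, |mF u t (q t)| ≤ Real.exp (K * t) * |mF u 0 x₀| := by
  have hmx : ∀ t x, HasDerivAt (mF u t) (pdx u t x - pdx (pdx (pdx u)) t x) x :=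
    fun t x => (hux t x).hasDerivAt.sub (huxxx t x).hasDerivAt
  have hmt : ∀ t x, HasDerivAt (fun s => mF u s x) (pdt (mF u) t x) t := fun t x =>
    (show DifferentiableAt ℝ (fun s => mF u s x) t from (hut x).sub (hutxx x) t).hasDerivAt
  have hchar : ∀ t ∈ Icc 0 T,
      HasDerivAt (fun s => mF u s (q s)) (-2 * MF u t (q t) * mF u t (q t)) t := by
    intro t ht
    have hcurve := hasDerivAt_along_curve (hmt t (q t))
      (f' := fun s y => pdx u s y - pdx (pdx (pdx u)) s y)
      (.of_forall fun p => hmx p.1 p.2) (hcx.sub hcxxx).continuousAt (hq t ht)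
    have hmx_eq : pdx (mF u) t (q t) = pdx u t (q t) - pdx (pdx (pdx u)) t (q t) :=
      (hmx t (q t)).deriv
    rw [← hmx_eq, smul_eq_mul] at hcurve
    refine hcurve.congr_deriv ?_
    unfold MF
    linear_combination heq t ht (q t)
  intro t ht
  simpa [hq0] using abs_le_exp_mul_abs_of_hasDerivAt_mul_self hchar
    (fun s hs => by have := hbound s hs (q s); unfold MF; linarith) t ht

theorem stmt13 (T : ℝ) (hT : 0 < T) (u : ℝ → ℝ → ℝ)
    -- existence of the partial derivatives u_x, u_xx, u_xxx, u_t, u_tx, u_txx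
    (hux : ∀ t : ℝ, Differentiable ℝ (fun y => u t y))
    (huxx : ∀ t : ℝ, Differentiable ℝ (fun y => pdx u t y))
    (huxxx : ∀ t : ℝ, Differentiable ℝ (fun y => pdx (pdx u) t y))
    (hut : ∀ x : ℝ, Differentiable ℝ (fun s => u s x))
    (hutx : ∀ x : ℝ, Differentiable ℝ (fun s => pdx u s x))
    (hutxx : ∀ x : ℝ, Differentiable ℝ (fun s => pdx (pdx u) s x))
    -- continuity of u and of these partial derivatives
    (hc : Continuous (Function.uncurry u))
    (hcx : Continuous (Function.uncurry (pdx u)))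
    (hcxx : Continuous (Function.uncurry (pdx (pdx u))))
    (hcxxx : Continuous (Function.uncurry (pdx (pdx (pdx u)))))
    (hct : Continuous (Function.uncurry (pdt u)))
    (hctx : Continuous (Function.uncurry (pdt (pdx u))))
    (hctxx : Continuous (Function.uncurry (pdt (pdx (pdx u)))))
    -- the sine-mCH equation: m_t + sin(u² - u_x²)·m_x = -2·cos(u² - u_x²)·u_x·m²
    (heq : ∀ t ∈ Set.Icc (0 : ℝ) T, ∀ x : ℝ,
      pdt (mF u) t x + Real.sin ((u t x) ^ 2 - (pdx u t x) ^ 2) * pdx (mF u) t x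
        = -2 * Real.cos ((u t x) ^ 2 - (pdx u t x) ^ 2) * pdx u t x * (mF u t x) ^ 2)
    (x₀ : ℝ) (q : ℝ → ℝ) (hq0 : q 0 = x₀)
    (hq : ∀ t ∈ Set.Icc (0 : ℝ) T,
      HasDerivAt q (Real.sin ((u t (q t)) ^ 2 - (pdx u t (q t)) ^ 2)) t)
    -- the lower bound  cos(u² - u_x²)·u_x·m ≥ -K/2
    (K : ℝ) (hK : 0 ≤ K)
    (hbound : ∀ t ∈ Set.Icc (0 : ℝ) T, ∀ x : ℝ,
      -(K / 2) ≤ Real.cos ((u t x) ^ 2 - (pdx u t x) ^ 2) * pdx u t x * mF u t x) :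
    ∀ t ∈ Set.Icc (0 : ℝ) T, |mF u t (q t)| ≤ Real.exp (K * t) * |mF u 0 x₀| :=
  stmt13_general T u hux huxxx hut hutxx hcx hcxxx heq x₀ q hq0 hq K hbound
end

section
/- Let T > 0, C₁ ≥ 0, and let m̄, M̄ : [0,T) → ℝ be differentiable with m̄(t) > 0 for all t, m̄'(t) = −2·m̄(t)·M̄(t) for all t, and M̄'(t) ≤ −2·M̄(t)² + C₁·m̄(t) for all t. Then for every t ∈ [0,T): M̄(t)/m̄(t) ≤ M̄(0)/m̄(0) + C₁·t. -/
open Set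

theorem stmt14 (T C₁ : ℝ) (hT : 0 < T) (hC : 0 ≤ C₁) (mb Mb : ℝ → ℝ)
    (hpos : ∀ t ∈ Set.Ico (0 : ℝ) T, 0 < mb t)
    (hm : ∀ t ∈ Set.Ico (0 : ℝ) T, HasDerivAt mb (-2 * mb t * Mb t) t)
    (hMdiff : ∀ t ∈ Set.Ico (0 : ℝ) T, DifferentiableAt ℝ Mb t)
    (hM : ∀ t ∈ Set.Ico (0 : ℝ) T, deriv Mb t ≤ -2 * (Mb t) ^ 2 + C₁ * mb t) :
    ∀ t ∈ Set.Ico (0 : ℝ) T, Mb t / mb t ≤ Mb 0 / mb 0 + C₁ * t := by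
  intro t ht
  obtain ⟨ht0, htT⟩ := ht
  rcases eq_or_lt_of_le ht0 with h0 | h0
  · simp [← h0]
  set g : ℝ → ℝ := fun x => Mb x / mb x - C₁ * x with hg
  have hsub : Icc (0:ℝ) t ⊆ Ico 0 T := fun x hx => ⟨hx.1, lt_of_le_of_lt hx.2 htT⟩
  have hcont : ContinuousOn g (Icc 0 t) := by
    intro x hx
    have hxI := hsub hx
    exact ((((hMdiff x hxI).continuousAt.div (hm x hxI).differentiableAt.continuousAt
      (hpos x hxI).ne').sub (continuous_const.mul continuous_id).continuousAt)).continuousWithinAt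
  have hanti : AntitoneOn g (Icc 0 t) := by
    have hder : ∀ x ∈ Ioo (0:ℝ) t, HasDerivAt g ((deriv Mb x * mb x - Mb x * (-2 * mb x * Mb x)) / (mb x) ^ 2 - C₁) x := by
      intro x hx
      have hxI : x ∈ Ico (0:ℝ) T := ⟨le_of_lt hx.1, lt_trans hx.2 htT⟩
      have hmx := hpos x hxI
      have hd : HasDerivAt g ((deriv Mb x * mb x - Mb x * (-2 * mb x * Mb x)) / (mb x) ^ 2 - C₁) x := by
        exact (((hMdiff x hxI).hasDerivAt.div (hm x hxI) hmx.ne')).sub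
          ((hasDerivAt_id x).const_mul C₁ |>.congr_deriv (by ring))
      exact hd
    apply antitoneOn_of_deriv_nonpos (convex_Icc 0 t) hcont
    · intro x hx
      rw [interior_Icc] at hx
      exact (hder x hx).differentiableAt.differentiableWithinAt
    intro x hx
    rw [interior_Icc] at hx
    have hxI : x ∈ Ico (0:ℝ) T := ⟨le_of_lt hx.1, lt_trans hx.2 htT⟩
    have hmx := hpos x hxI
    rw [(hder x hx).deriv]
    have hM' := hM x hxI
    have key : (deriv Mb x * mb x - Mb x * (-2 * mb x * Mb x)) / (mb x) ^ 2 ≤ C₁ := by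
      rw [div_le_iff₀ (by positivity)]
      nlinarith [hmx, sq_nonneg (Mb x)]
    linarith
  have := hanti (left_mem_Icc.mpr (le_of_lt h0)) (right_mem_Icc.mpr (le_of_lt h0)) (le_of_lt h0)
  simp only [hg] at this
  linarith
end

section
/- Let T > 0, C₁ ≥ 0, and let m̄, M̄ : [0,T) → ℝ be differentiable with m̄(t) > 0 for all t, m̄'(t) = −2·m̄(t)·M̄(t) for all t, and M̄'(t) ≤ −2·M̄(t)² + C₁·m̄(t) for all t. Then for every t ∈ [0,T): 0 < 1/m̄(t) ≤ 2·(M̄(0)/m̄(0))·t + C₁·t² + 1/m̄(0). -/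
open Set

/-!
Along the flow, `h = M̄ / m̄` satisfies `h' = (M̄' + 2 M̄²) / m̄ ≤ C₁`, so `h t ≤ h 0 + C₁ t`.
Moreover `(1 / m̄)' = 2 h`, and integrating the bound on `h` once more gives the quadratic
bound on `1 / m̄`.
-/

theorem le_of_hasDerivAt_le_of_le_on_Ico {a b : ℝ} {f g f' g' : ℝ → ℝ}
    (hf : ∀ x ∈ Ico a b, HasDerivAt f (f' x) x) (hg : ∀ x ∈ Ico a b, HasDerivAt g (g' x) x)
    (hle : ∀ x ∈ Ico a b, f' x ≤ g' x) (ha : f a ≤ g a) :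
    ∀ t ∈ Ico a b, f t ≤ g t := by
  intro t ht
  have hsub : Icc a t ⊆ Ico a b := Icc_subset_Ico_right ht.2
  have hcont : ∀ {u u' : ℝ → ℝ}, (∀ x ∈ Ico a b, HasDerivAt u (u' x) x) →
      ContinuousOn u (Icc a t) := fun hu x hx =>
    (hu x (hsub hx)).continuousAt.continuousWithinAt
  refine image_le_of_deriv_right_le_deriv_boundary (hcont hf)
    (fun x hx => (hf x (hsub (Ico_subset_Icc_self hx))).hasDerivWithinAt) ha (hcont hg)
    (fun x hx => (hg x (hsub (Ico_subset_Icc_self hx))).hasDerivWithinAt)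
    (fun x hx => hle x (hsub (Ico_subset_Icc_self hx))) ⟨ht.1, le_rfl⟩

section Flow

variable {m M : ℝ → ℝ} {t : ℝ}

theorem hasDerivAt_div_of_hasDerivAt_neg_two_mul (hm : HasDerivAt m (-2 * m t * M t) t) {M' : ℝ}
    (hM : HasDerivAt M M' t) (hm0 : m t ≠ 0) :
    HasDerivAt (fun s => M s / m s) ((M' + 2 * M t ^ 2) / m t) t := by
  refine (hM.fun_div hm hm0).congr_deriv ?_
  field_simp
  ring

theorem hasDerivAt_one_div_of_hasDerivAt_neg_two_mul (hm : HasDerivAt m (-2 * m t * M t) t)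
    (hm0 : m t ≠ 0) :
    HasDerivAt (fun s => 1 / m s) (2 * (M t / m t)) t := by
  refine ((hasDerivAt_const t (1 : ℝ)).fun_div hm hm0).congr_deriv ?_
  field_simp
  ring

end Flow

theorem stmt15_general (T C₁ : ℝ) (mb Mb : ℝ → ℝ)
    (hpos : ∀ t ∈ Set.Ico (0 : ℝ) T, 0 < mb t)
    (hm : ∀ t ∈ Set.Ico (0 : ℝ) T, HasDerivAt mb (-2 * mb t * Mb t) t)
    (hMdiff : ∀ t ∈ Set.Ico (0 : ℝ) T, DifferentiableAt ℝ Mb t)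
    (hM : ∀ t ∈ Set.Ico (0 : ℝ) T, deriv Mb t ≤ -2 * (Mb t) ^ 2 + C₁ * mb t) :
    ∀ t ∈ Set.Ico (0 : ℝ) T,
      0 < 1 / mb t ∧ 1 / mb t ≤ 2 * (Mb 0 / mb 0) * t + C₁ * t ^ 2 + 1 / mb 0 := by
  have hlin : ∀ c x : ℝ, HasDerivAt (fun s => c + C₁ * s) C₁ x := fun c x => by
    simpa using ((hasDerivAt_id x).const_mul C₁).const_add c
  have hquad : ∀ x : ℝ, HasDerivAt (fun s => 2 * (Mb 0 / mb 0) * s + C₁ * s ^ 2 + 1 / mb 0)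
      (2 * (Mb 0 / mb 0 + C₁ * x)) x := fun x => by
    refine ((((hasDerivAt_id' x).const_mul (2 * (Mb 0 / mb 0))).fun_add
      ((hasDerivAt_pow 2 x).const_mul C₁)).add_const (1 / mb 0)).congr_deriv ?_
    norm_num
    ring
  have hratio : ∀ t ∈ Ico (0 : ℝ) T, Mb t / mb t ≤ Mb 0 / mb 0 + C₁ * t := by
    refine le_of_hasDerivAt_le_of_le_on_Ico
      (fun x hx => hasDerivAt_div_of_hasDerivAt_neg_two_mul (hm x hx) (hMdiff x hx).hasDerivAt
        (hpos x hx).ne') (fun x _ => hlin _ x) (fun x hx => ?_) (by simp)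
    rw [div_le_iff₀ (hpos x hx)]
    linarith [hM x hx]
  intro t ht
  refine ⟨one_div_pos.mpr (hpos t ht), ?_⟩
  refine le_of_hasDerivAt_le_of_le_on_Ico
    (fun x hx => hasDerivAt_one_div_of_hasDerivAt_neg_two_mul (hm x hx) (hpos x hx).ne')
    (fun x _ => hquad x) (fun x hx => by linarith [hratio x hx]) (by simp) t ht

theorem stmt15 (T C₁ : ℝ) (hT : 0 < T) (hC : 0 ≤ C₁) (mb Mb : ℝ → ℝ)
    (hpos : ∀ t ∈ Set.Ico (0 : ℝ) T, 0 < mb t)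
    (hm : ∀ t ∈ Set.Ico (0 : ℝ) T, HasDerivAt mb (-2 * mb t * Mb t) t)
    (hMdiff : ∀ t ∈ Set.Ico (0 : ℝ) T, DifferentiableAt ℝ Mb t)
    (hM : ∀ t ∈ Set.Ico (0 : ℝ) T, deriv Mb t ≤ -2 * (Mb t) ^ 2 + C₁ * mb t) :
    ∀ t ∈ Set.Ico (0 : ℝ) T,
      0 < 1 / mb t ∧ 1 / mb t ≤ 2 * (Mb 0 / mb 0) * t + C₁ * t ^ 2 + 1 / mb 0 :=
  stmt15_general T C₁ mb Mb hpos hm hMdiff hM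
end
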